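/- The maximum lifetime of the jammer network with life spans w equals the maximum, over all multiplicity functions n assigning a natural number n(M) to each minimum reliable solution M and satisfying the life-span constraints ∑_{M : j ∈ M} n(M) ≤ w j for every jammer j, of the total ∑_M n(M). That is, the optimal schedule length coincides with the optimum of the integer linear program over the minimum reliable set. -/

import Mathlib

open Metric

/-- A finite set `A` of jammers is *reliable* if activating exactly the jammers in `A`
satisfies the SINR threshold constraints on the storage boundary `S` and the fence
boundary `F`. -/
def Reliable {J : Type*} (x : J → EuclideanSpace ℝ (Fin 2))
    (S F : Set (EuclideanSpace ℝ (Fin 2))) (PT PJ δ1 δ2 γ : ℝ) (A : Finset J) : Prop :=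
  (∀ s ∈ S, ∑ j ∈ A, dist (x j) s ^ (-γ) ≤ PT / (PJ * δ1)) ∧
  (∀ p ∈ F, ∑ j ∈ A, dist (x j) p ^ (-γ) ≥ PT * infDist p S ^ (-γ) / (PJ * δ2))

/-- `D : Fin l → Finset J` is a *schedule of length `l`* for life spans `w` if every
slot is reliable and each jammer `j` is active in at most `w j` slots. -/
def IsSchedule {J : Type*} [DecidableEq J] (x : J → EuclideanSpace ℝ (Fin 2))
    (S F : Set (EuclideanSpace ℝ (Fin 2))) (PT PJ δ1 δ2 γ : ℝ) (w : J → ℕ)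
    (l : ℕ) (D : Fin l → Finset J) : Prop :=
  (∀ i, Reliable x S F PT PJ δ1 δ2 γ (D i)) ∧
  ∀ j, (Finset.univ.filter fun i => j ∈ D i).card ≤ w j

/-- `M` is a *minimum reliable solution* if `M` is reliable and no proper subset of `M`
is reliable. -/
def MinReliable {J : Type*} (x : J → EuclideanSpace ℝ (Fin 2))
    (S F : Set (EuclideanSpace ℝ (Fin 2))) (PT PJ δ1 δ2 γ : ℝ) (M : Finset J) : Prop :=
  Reliable x S F PT PJ δ1 δ2 γ M ∧ ∀ N ⊂ M, ¬ Reliable x S F PT PJ δ1 δ2 γ N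

/-! Every reliable set contains a minimum reliable one, and shrinking the slots of a schedule
only lowers how often each jammer is active; so a longest schedule may be assumed to use minimum
reliable solutions only. Such a schedule is determined, up to the order of its slots, by how many
times each set occurs, and these multiplicities are exactly the feasible points of the integer
program, with the length of the schedule as objective value. -/

open Finset

section Fibers

variable {ι α : Type*} [Fintype ι] [Fintype α] [DecidableEq α]

theorem Finset.sum_ite_card_fiber_eq_card_filter (f : ι → α) (p : α → Prop) [DecidablePred p] :
    ∑ a, (if p a then #{i | f i = a} else 0) = #{i | p (f i)} := by
  rw [← sum_filter, card_eq_sum_card_fiberwise (f := f) (t := {a | p a}) (by intro i; simp)]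
  refine sum_congr rfl fun a ha => ?_
  rw [filter_filter]
  congr 1
  exact filter_congr fun i _ => by simp_all

theorem Fintype.exists_fin_card_fiber_eq (n : α → ℕ) :
    ∃ f : Fin (∑ a, n a) → α, ∀ a, #{i | f i = a} = n a := by
  let e : (Σ a, Fin (n a)) ≃ Fin (∑ a, n a) := Fintype.equivFinOfCardEq (by simp)
  refine ⟨fun i => (e.symm i).1, fun a => ?_⟩
  calc #{i | (e.symm i).1 = a} = #{σ : Σ a, Fin (n a) | σ.1 = a} :=
        Finset.card_equiv e.symm (by simp)
    _ = n a := by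
        rw [card_filter, sum_sigma]
        simp [apply_ite Finset.card]

end Fibers

section Jammers

variable {J : Type*} {x : J → EuclideanSpace ℝ (Fin 2)} {S F : Set (EuclideanSpace ℝ (Fin 2))}
  {PT PJ δ1 δ2 γ : ℝ}

theorem exists_minReliable_subset {A : Finset J} (hA : Reliable x S F PT PJ δ1 δ2 γ A) :
    ∃ M ⊆ A, MinReliable x S F PT PJ δ1 δ2 γ M := by
  obtain ⟨M, hMA, hM⟩ := exists_minimal_le_of_wellFoundedLT _ A hA
  exact ⟨M, hMA, minimal_iff_forall_lt.mp hM⟩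

variable [Fintype J] [DecidableEq J] {w : J → ℕ}

theorem exists_ilp_solution_of_isSchedule {l : ℕ} {D : Fin l → Finset J}
    (hD : IsSchedule x S F PT PJ δ1 δ2 γ w l D) :
    ∃ n : Finset J → ℕ, (∀ M, n M ≠ 0 → MinReliable x S F PT PJ δ1 δ2 γ M) ∧
      (∀ j, ∑ M, (if j ∈ M then n M else 0) ≤ w j) ∧ l = ∑ M, n M := by
  choose M hMD hM using fun i => exists_minReliable_subset (hD.1 i)
  refine ⟨fun N => #{i | M i = N}, fun N hN => ?_, fun j => ?_, ?_⟩
  · obtain ⟨i, hi⟩ := card_ne_zero.mp hN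
    exact (mem_filter.mp hi).2 ▸ hM i
  · rw [sum_ite_card_fiber_eq_card_filter]
    exact (card_le_card fun i => by simpa using (hMD i ·)).trans (hD.2 j)
  · simpa using (sum_ite_card_fiber_eq_card_filter M fun _ => True).symm

theorem exists_isSchedule_of_ilp_solution {n : Finset J → ℕ}
    (hn : ∀ M, n M ≠ 0 → MinReliable x S F PT PJ δ1 δ2 γ M)
    (hw : ∀ j, ∑ M, (if j ∈ M then n M else 0) ≤ w j) :
    ∃ D, IsSchedule x S F PT PJ δ1 δ2 γ w (∑ M, n M) D := by
  obtain ⟨D, hD⟩ := Fintype.exists_fin_card_fiber_eq n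
  refine ⟨D, fun i => (hn _ ?_).1, fun j => ?_⟩
  · rw [← hD]
    exact card_ne_zero.mpr ⟨i, by simp⟩
  · calc #{i | j ∈ D i} = ∑ M, if j ∈ M then #{i | D i = M} else 0 :=
          (sum_ite_card_fiber_eq_card_filter D (j ∈ ·)).symm
      _ ≤ w j := by simpa only [hD] using hw j

end Jammers

/-- The maximum lifetime of the jammer network equals the optimum of the integer linear
program over the minimum reliable set: a multiplicity `n M` for each minimum reliable
solution `M`, subject to `∑_{M ∋ j} n M ≤ w j` for every jammer `j`, maximizing
`∑ M, n M`. -/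
theorem lifetime_eq_ILP_optimum {J : Type*} [Fintype J] [DecidableEq J]
    (x : J → EuclideanSpace ℝ (Fin 2)) (S F : Set (EuclideanSpace ℝ (Fin 2)))
    (PT PJ δ1 δ2 γ : ℝ) (w : J → ℕ) (L : ℕ) :
    IsGreatest {l : ℕ |
        ∃ D : Fin l → Finset J, IsSchedule x S F PT PJ δ1 δ2 γ w l D} L ↔
    IsGreatest {t : ℕ | ∃ n : Finset J → ℕ,
        (∀ M : Finset J, n M ≠ 0 → MinReliable x S F PT PJ δ1 δ2 γ M) ∧
        (∀ j : J, ∑ M : Finset J, (if j ∈ M then n M else 0) ≤ w j) ∧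
        t = ∑ M : Finset J, n M} L := by
  congr! 2
  ext l
  constructor
  · rintro ⟨D, hD⟩
    exact exists_ilp_solution_of_isSchedule hD
  · rintro ⟨n, hn, hw, rfl⟩
    exact exists_isSchedule_of_ilp_solution hn hw
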